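/- Let A = k[[t^a, t^{a+1}]] with a ≥ 2, 𝔪 its maximal ideal, q > 0 an integer, 0 < s ∈ H = ⟨a, a+1⟩, Q = (t^s), I = Q : 𝔪^q. Then the following are equivalent: (1) I ⊆ t^s k[[t]] ∩ A (I is integral over Q); (2) 𝔪^q I = 𝔪^q Q; (3) q < a. -/

import Mathlib

set_option maxHeartbeats 1000000
set_option synthInstance.maxHeartbeats 1000000

open PowerSeries

/-- The numerical semigroup ring `k[[H]]`: power series supported on `H`. -/
noncomputable def ssr (k : Type) [Field k] (H : AddSubmonoid ℕ) :
    Subalgebra k (PowerSeries k) where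
  carrier := {f | ∀ n : ℕ, n ∉ H → PowerSeries.coeff n f = 0}
  mul_mem' := by
    intro f g hf hg n hn
    rw [Set.mem_setOf_eq] at hf hg
    rw [PowerSeries.coeff_mul]
    apply Finset.sum_eq_zero
    rintro ⟨i, j⟩ hij
    replace hij : i + j = n := by simpa using hij
    dsimp only
    by_cases hi : i ∈ H
    · have hj : j ∉ H := fun hj => hn (hij ▸ H.add_mem hi hj)
      rw [hg j hj, mul_zero]
    · rw [hf i hi, zero_mul]
  add_mem' := by
    intro f g hf hg n hn
    rw [Set.mem_setOf_eq] at hf hg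
    rw [map_add, hf n hn, hg n hn, add_zero]
  one_mem' := by
    intro n hn
    have h0 : n ≠ 0 := fun h => hn (by rw [h]; exact H.zero_mem)
    simp [PowerSeries.coeff_one, h0]
  zero_mem' := by
    intro n _
    simp
  algebraMap_mem' := by
    intro r n hn
    have h0 : n ≠ 0 := fun h => hn (by rw [h]; exact H.zero_mem)
    simp [PowerSeries.algebraMap_apply, PowerSeries.coeff_C, h0]

/-- The monomial `t^n` as an element of `k[[H]]`, for `n ∈ H`. -/
noncomputable def tp (k : Type) [Field k] (H : AddSubmonoid ℕ) (n : ℕ) (hn : n ∈ H) :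
    ssr k H :=
  ⟨PowerSeries.X ^ n, by
    intro m hm
    rw [PowerSeries.coeff_X_pow]
    exact if_neg (fun h => hm (by rw [h]; exact hn))⟩

/-- The maximal ideal of `k[[H]]`, generated by the monomials `t^n`, `0 < n ∈ H`. -/
noncomputable def mIdeal (k : Type) [Field k] (H : AddSubmonoid ℕ) : Ideal (ssr k H) :=
  Ideal.span {x | ∃ n : ℕ, ∃ hn : n ∈ H, 0 < n ∧ x = tp k H n hn}

/-!
All ideals involved are monomial: an element of `k[[H]]` lies in the ideal generated by the
`t^m`, `m ∈ M`, iff its support lies in `M + H`. As `𝔪^q` is generated by the `t^(qa + i)`,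
`i ≤ q`, a monomial `t^v` lies in `I` iff `v + qa + i ∈ s + H` for all `i ≤ q`, and everything
reduces to arithmetic in `H = {ma + c | c ≤ m}`. If `q < a`, a run of `q + 1` consecutive
elements of `H` starts at `qa` or later (so `v ≥ s`), and lies within distance `q` above elements
of `H` (so `𝔪^q I ⊆ 𝔪^q Q`). If `a ≤ q`, every number from `(q - 1)a` on lies in `H` (the
conductor is `(a - 1)a`), so an `m ∈ H` with `s - a ≤ m < s` gives a monomial `t^m ∈ I`
that is neither divisible by `t^s` nor, after multiplying by `t^(qa)`, in `𝔪^q Q`.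
-/

open scoped Pointwise

theorem PowerSeries.exists_coeff_ne_zero_of_coeff_mul_ne_zero {R : Type*} [Semiring R]
    {f g : R⟦X⟧} {n : ℕ} (h : coeff n (f * g) ≠ 0) :
    ∃ u v, u + v = n ∧ coeff u f ≠ 0 ∧ coeff v g ≠ 0 := by
  rw [coeff_mul] at h
  obtain ⟨⟨u, v⟩, huv, hne⟩ := Finset.exists_ne_zero_of_sum_ne_zero h
  exact ⟨u, v, Finset.HasAntidiagonal.mem_antidiagonal.1 huv, left_ne_zero_of_mul hne,
    right_ne_zero_of_mul hne⟩

theorem PowerSeries.forall_coeff_mul_X_pow_ne_zero_iff {R : Type*} [Semiring R] {f : R⟦X⟧}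
    {m : ℕ} {P : ℕ → Prop} :
    (∀ n, coeff n (f * X ^ m) ≠ 0 → P n) ↔ ∀ v, coeff v f ≠ 0 → P (v + m) := by
  refine ⟨fun h v hv => h _ (by rwa [coeff_mul_X_pow]), fun h n hn => ?_⟩
  rw [coeff_mul_X_pow'] at hn
  split_ifs at hn with hmn
  · simpa [Nat.sub_add_cancel hmn] using h _ hn
  · exact absurd rfl hn

section MonomialIdeals

variable {k : Type} [Field k] {H : AddSubmonoid ℕ}

theorem mem_of_coeff_ne_zero (x : ssr k H) {n : ℕ} (hn : coeff n (x : k⟦X⟧) ≠ 0) :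
    n ∈ H :=
  not_not.1 (mt (x.2 n) hn)

@[simp]
theorem coe_tp {n : ℕ} (hn : n ∈ H) : (tp k H n hn : k⟦X⟧) = X ^ n := rfl

variable (k H) in
/-- Only the exponents in `M ∩ H` contribute. -/
def monomials (M : Set ℕ) : Set (ssr k H) :=
  {x | ∃ m ∈ M, (x : k⟦X⟧) = X ^ m}

theorem monomials_singleton {m : ℕ} (hm : m ∈ H) : monomials k H {m} = {tp k H m hm} := by
  ext x
  simp only [monomials, Set.mem_singleton_iff, exists_eq_left, Set.mem_ofPred_eq]
  exact ⟨fun h => Subtype.ext h, fun h => h ▸ rfl⟩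

theorem monomials_insert {m : ℕ} (hm : m ∈ H) (M : Set ℕ) :
    monomials k H (insert m M) = insert (tp k H m hm) (monomials k H M) := by
  rw [Set.insert_eq, Set.insert_eq, ← monomials_singleton hm]
  ext x
  simp [monomials, or_and_right, exists_or]

theorem monomials_add {M N : Set ℕ} (hM : M ⊆ H) (hN : N ⊆ H) :
    monomials k H (M + N) = monomials k H M * monomials k H N := by
  ext x
  constructor
  · rintro ⟨_, ⟨m, hm, n, hn, rfl⟩, hx⟩
    exact ⟨tp k H m (hM hm), ⟨m, hm, rfl⟩, tp k H n (hN hn), ⟨n, hn, rfl⟩,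
      Subtype.ext (by simp [hx, pow_add])⟩
  · rintro ⟨y, ⟨m, hm, hy⟩, z, ⟨n, hn, hz⟩, rfl⟩
    exact ⟨m + n, Set.add_mem_add hm hn, by simp [hy, hz, pow_add]⟩

theorem monomials_zero : monomials k H {0} = {1} := by
  rw [monomials_singleton H.zero_mem]
  congr

theorem span_monomials_pow {M : Set ℕ} (hM : M ⊆ H) (q : ℕ) :
    Ideal.span (monomials k H M) ^ q = Ideal.span (monomials k H (q • M)) := by
  induction q with
  | zero => rw [pow_zero, zero_nsmul, ← Set.singleton_zero, monomials_zero, Ideal.one_eq_top,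
      Ideal.span_singleton_one]
  | succ q ih =>
    rw [pow_succ, ih, Ideal.span_mul_span', succ_nsmul,
      monomials_add (AddSubmonoid.nsmul_subset hM) hM]

theorem mem_add_of_coeff_ne_zero_of_mem_span {M : Set ℕ} {x : ssr k H}
    (hx : x ∈ Ideal.span (monomials k H M)) :
    ∀ n, coeff n (x : k⟦X⟧) ≠ 0 → n ∈ M + (H : Set ℕ) := by
  induction hx using Submodule.span_induction with
  | mem y hy =>
    obtain ⟨m, hm, hy⟩ := hy
    intro n hn
    rw [hy, coeff_X_pow] at hn
    obtain rfl : n = m := by by_contra h; exact hn (if_neg h)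
    exact ⟨n, hm, 0, H.zero_mem, add_zero n⟩
  | zero => simp
  | add y z _ _ hy hz =>
    intro n hn
    by_cases hyn : coeff n (y : k⟦X⟧) = 0
    · exact hz n (by simpa [hyn] using hn)
    · exact hy n hyn
  | smul c y _ hy =>
    intro n hn
    rw [smul_eq_mul, Subalgebra.coe_mul] at hn
    obtain ⟨u, v, rfl, hu, hv⟩ := exists_coeff_ne_zero_of_coeff_mul_ne_zero hn
    obtain ⟨m, hm, h, hh, rfl⟩ := hy v hv
    exact ⟨m, hm, u + h, H.add_mem (mem_of_coeff_ne_zero c hu) hh, by ring⟩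

theorem exists_eq_tp_mul_add (x : ssr k H) {m : ℕ} (hm : m ∈ H) :
    ∃ g r : ssr k H, x = tp k H m hm * g + r ∧
      ∀ n, coeff n (r : k⟦X⟧) ≠ 0 →
        coeff n (x : k⟦X⟧) ≠ 0 ∧ ∀ h ∈ H, m + h ≠ n := by
  classical
  let g : ssr k H := ⟨mk fun d => if d ∈ H then coeff (m + d) (x : k⟦X⟧) else 0,
    fun d hd => by simp [hd]⟩
  have hcoeff : ∀ n, coeff n ((tp k H m hm * g : ssr k H) : k⟦X⟧) =
      if ∃ h ∈ H, m + h = n then coeff n (x : k⟦X⟧) else 0 := by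
    intro n
    rw [Subalgebra.coe_mul, coe_tp, mul_comm, coeff_mul_X_pow']
    by_cases hmn : m ≤ n
    · obtain ⟨d, rfl⟩ := Nat.exists_eq_add_of_le hmn
      simp [g, hmn]
    · simp only [if_neg hmn]
      rw [if_neg]
      rintro ⟨h, -, rfl⟩
      exact hmn (Nat.le_add_right m h)
  refine ⟨g, x - tp k H m hm * g, by ring, fun n hn => ?_⟩
  rw [Subalgebra.coe_sub, map_sub, hcoeff] at hn
  split_ifs at hn with h
  · exact absurd (sub_self _) hn
  · simp only [not_exists, not_and] at h
    exact ⟨by simpa using hn, h⟩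

theorem mem_span_monomials_of_coeff {M : Set ℕ} (hM : M.Finite) (hMH : M ⊆ H) {x : ssr k H}
    (hx : ∀ n, coeff n (x : k⟦X⟧) ≠ 0 → n ∈ M + (H : Set ℕ)) :
    x ∈ Ideal.span (monomials k H M) := by
  induction M, hM using Set.Finite.induction_on generalizing x with
  | empty =>
    have : x = 0 := Subtype.ext (ext fun n => by_contra fun hn => by simpa using hx n hn)
    exact this ▸ zero_mem _
  | @insert m M _ _ ih =>
    have hm : m ∈ H := hMH (Set.mem_insert m M)
    obtain ⟨g, r, rfl, hr⟩ := exists_eq_tp_mul_add x hm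
    rw [monomials_insert hm]
    refine add_mem (Ideal.mul_mem_right _ _ (Ideal.subset_span (Set.mem_insert _ _))) ?_
    refine Ideal.span_mono (Set.subset_insert _ _)
      (ih (fun _ h => hMH (Set.mem_insert_of_mem m h)) fun n hn => ?_)
    obtain ⟨hxn, hnm⟩ := hr n hn
    obtain ⟨m', hm', h, hh, rfl⟩ := hx n hxn
    rcases hm' with rfl | hm'
    · exact absurd rfl (hnm h hh)
    · exact Set.add_mem_add hm' hh

theorem mem_span_monomials_iff {M : Set ℕ} (hM : M.Finite) (hMH : M ⊆ H) {x : ssr k H} :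
    x ∈ Ideal.span (monomials k H M) ↔
      ∀ n, coeff n (x : k⟦X⟧) ≠ 0 → n ∈ M + (H : Set ℕ) :=
  ⟨mem_add_of_coeff_ne_zero_of_mem_span, mem_span_monomials_of_coeff hM hMH⟩

theorem mem_colon_span_monomials_iff {M N : Set ℕ} (hN : N.Finite) (hNH : N ⊆ H) (hMH : M ⊆ H)
    {x : ssr k H} :
    x ∈ (Ideal.span (monomials k H N)).colon (Ideal.span (monomials k H M) : Set (ssr k H)) ↔
      ∀ v, coeff v (x : k⟦X⟧) ≠ 0 → ∀ m ∈ M, v + m ∈ N + (H : Set ℕ) := by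
  have key : ∀ {y : ssr k H} {m : ℕ}, (y : k⟦X⟧) = X ^ m →
      (x • y ∈ Ideal.span (monomials k H N) ↔
        ∀ v, coeff v (x : k⟦X⟧) ≠ 0 → v + m ∈ N + (H : Set ℕ)) := by
    intro y m hy
    rw [mem_span_monomials_iff hN hNH, smul_eq_mul, Subalgebra.coe_mul, hy,
      forall_coeff_mul_X_pow_ne_zero_iff]
  rw [Ideal.colon_span, Submodule.mem_colon]
  constructor
  · intro h v hv m hm
    exact (key (coe_tp (hMH hm))).1 (h _ ⟨m, hm, rfl⟩) v hv
  · rintro h y ⟨m, hm, hy⟩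
    exact (key hy).2 fun v hv => h v hv m hm

end MonomialIdeals

abbrev pairSemigroup (a : ℕ) : AddSubmonoid ℕ :=
  AddSubmonoid.closure {a, a + 1}

section PairSemigroup

variable {a : ℕ}

theorem mem_pairSemigroup_iff {n : ℕ} :
    n ∈ pairSemigroup a ↔ ∃ m c, c ≤ m ∧ m * a + c = n := by
  constructor
  · intro h
    induction h using AddSubmonoid.closure_induction with
    | mem x hx =>
      rcases hx with rfl | rfl
      · exact ⟨1, 0, zero_le_one, by ring⟩
      · exact ⟨1, 1, le_rfl, by ring⟩
    | zero => exact ⟨0, 0, le_rfl, by ring⟩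
    | add x y _ _ hx hy =>
      obtain ⟨m, c, hcm, rfl⟩ := hx
      obtain ⟨m', c', hcm', rfl⟩ := hy
      exact ⟨m + m', c + c', add_le_add hcm hcm', by ring⟩
  · rintro ⟨m, c, hcm, rfl⟩
    obtain ⟨d, rfl⟩ := Nat.exists_eq_add_of_le hcm
    have hsplit : (c + d) * a + c = d • a + c • (a + 1) := by simp only [smul_eq_mul]; ring
    rw [hsplit]
    exact add_mem (nsmul_mem (AddSubmonoid.subset_closure (by simp)) _)
      (nsmul_mem (AddSubmonoid.subset_closure (by simp)) _)

theorem mul_add_mem_pairSemigroup_iff {m c : ℕ} (hc : c < a) :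
    m * a + c ∈ pairSemigroup a ↔ c ≤ m := by
  refine ⟨fun h => ?_, fun h => mem_pairSemigroup_iff.2 ⟨m, c, h, rfl⟩⟩
  obtain ⟨m', c', hcm', he⟩ := mem_pairSemigroup_iff.1 h
  rcases le_or_gt m' m with hm | hm
  · nlinarith [Nat.mul_le_mul_right a hm]
  · nlinarith [Nat.mul_le_mul_right a (Nat.succ_le_of_lt hm)]

theorem exists_eq_mul_add (ha : 0 < a) (n : ℕ) : ∃ m c, c < a ∧ n = m * a + c :=
  ⟨n / a, n % a, Nat.mod_lt n ha, (Nat.div_add_mod' n a).symm⟩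

/-- `(a - 1) * a` is the conductor of `⟨a, a + 1⟩`. -/
theorem mem_pairSemigroup_of_le (ha : 0 < a) {n : ℕ} (hn : (a - 1) * a ≤ n) :
    n ∈ pairSemigroup a := by
  obtain ⟨m, c, hc, rfl⟩ := exists_eq_mul_add ha n
  have : a - 1 ≤ m := by
    by_contra! h
    nlinarith [Nat.mul_le_mul_right a (show m + 1 ≤ a - 1 by omega)]
  exact (mul_add_mem_pairSemigroup_iff hc).2 (by omega)

theorem exists_mem_pairSemigroup_lt (ha : 0 < a) {s : ℕ} (hs : s ∈ pairSemigroup a)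
    (hs0 : 0 < s) :
    ∃ m ∈ pairSemigroup a, m < s ∧ s ≤ m + a := by
  obtain ⟨M, c, hcM, rfl⟩ := mem_pairSemigroup_iff.1 hs
  rcases Nat.eq_zero_or_pos c with rfl | hc
  · obtain ⟨M, rfl⟩ : ∃ M', M = M' + 1 :=
      Nat.exists_eq_succ_of_ne_zero (by rintro rfl; simp at hs0)
    refine ⟨M * a + min M (a - 1), mem_pairSemigroup_iff.2 ⟨M, _, min_le_left _ _, rfl⟩,
      ?_, ?_⟩ <;>
      · rw [add_mul, one_mul]; omega
  · exact ⟨M * a + (c - 1), mem_pairSemigroup_iff.2 ⟨M, c - 1, by omega, rfl⟩,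
      by omega, by omega⟩

theorem mul_le_of_forall_add_mem {q u : ℕ} (hqa : q < a)
    (h : ∀ i ≤ q, u + i ∈ pairSemigroup a) : q * a ≤ u := by
  obtain ⟨m, c, hc, rfl⟩ := exists_eq_mul_add (a := a) (by omega) u
  suffices q ≤ m by nlinarith [Nat.mul_le_mul_right a this]
  by_cases hcq : c + q < a
  · have := h q le_rfl
    rw [add_assoc, mul_add_mem_pairSemigroup_iff hcq] at this
    omega
  · have := h (a - 1 - c) (by omega)
    rw [add_assoc, mul_add_mem_pairSemigroup_iff (by omega)] at this
    omega

/-- Above `m * a`, every gap of `⟨a, a + 1⟩` has length at most `a - 1 - m`. -/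
theorem exists_le_add_mem_of_mul_le {q m n : ℕ} (ha : 0 < a) (hq : a ≤ m + q + 1)
    (hn : m * a ≤ n) :
    ∃ j ≤ q, ∃ h ∈ pairSemigroup a, n = j + h := by
  obtain ⟨m', c, hc, rfl⟩ := exists_eq_mul_add ha n
  have hm : m ≤ m' := by
    by_contra! h
    nlinarith [Nat.mul_le_mul_right a (Nat.succ_le_of_lt h)]
  by_cases hcm : c ≤ m'
  · exact ⟨0, Nat.zero_le q, _, (mul_add_mem_pairSemigroup_iff hc).2 hcm, (zero_add _).symm⟩
  · exact ⟨c - m', by omega, m' * a + m', (mul_add_mem_pairSemigroup_iff (by omega)).2 le_rfl,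
      by omega⟩

theorem exists_le_add_mem {q w i : ℕ} (hqa : q < a)
    (h : ∀ i ≤ q, w + q * a + i ∈ pairSemigroup a) (hi : i ≤ q) :
    ∃ j ≤ q, ∃ h ∈ pairSemigroup a, w + i = j + h := by
  obtain ⟨m, c, hc, rfl⟩ := exists_eq_mul_add (a := a) (by omega) w
  have hshift : ∀ d, m * a + c + q * a + d = (m + q) * a + (c + d) := fun d => by ring
  by_cases hcq : c + q < a
  · have := h q le_rfl
    rw [hshift, mul_add_mem_pairSemigroup_iff hcq] at this
    exact ⟨i, hi, _, (mul_add_mem_pairSemigroup_iff hc).2 (by omega), add_comm _ _⟩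
  · have := h (a - 1 - c) (by omega)
    rw [hshift, mul_add_mem_pairSemigroup_iff (by omega)] at this
    exact exists_le_add_mem_of_mul_le (m := m) (by omega) (by omega) (by omega)

theorem le_of_forall_add_mem {q s v : ℕ} (hqa : q < a)
    (hv : ∀ i ≤ q, ∃ h ∈ pairSemigroup a, s + h = v + (q * a + i)) : s ≤ v := by
  obtain ⟨h₀, -, hh₀⟩ := hv 0 (Nat.zero_le q)
  have := mul_le_of_forall_add_mem (u := v + q * a - s) hqa fun i hi => by
    obtain ⟨h, hh, he⟩ := hv i hi
    rwa [show v + q * a - s + i = h by omega]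
  omega

theorem exists_add_eq_of_forall_add_mem {q s v i : ℕ} (hqa : q < a)
    (hv : ∀ i ≤ q, ∃ h ∈ pairSemigroup a, s + h = v + (q * a + i)) (hi : i ≤ q) :
    ∃ j ≤ q, ∃ h ∈ pairSemigroup a, v + (q * a + i) = s + (q * a + j) + h := by
  have hsv := le_of_forall_add_mem hqa hv
  obtain ⟨j, hj, h, hh, he⟩ := exists_le_add_mem (w := v - s) hqa (fun i hi => by
    obtain ⟨h, hh, he⟩ := hv i hi
    rwa [show v - s + q * a + i = h by omega]) hi
  exact ⟨j, hj, h, hh, by omega⟩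

theorem exists_lt_forall_add_mem {q s : ℕ} (ha : 0 < a) (hqa : a ≤ q)
    (hs : s ∈ pairSemigroup a) (hs0 : 0 < s) :
    ∃ m ∈ pairSemigroup a, m < s ∧
      ∀ i ≤ q, ∃ h ∈ pairSemigroup a, s + h = m + (q * a + i) := by
  obtain ⟨m, hm, hms, hsm⟩ := exists_mem_pairSemigroup_lt ha hs hs0
  have hqa' : (a - 1) * a + a ≤ q * a := by
    rw [← Nat.succ_mul]; exact Nat.mul_le_mul_right a (by omega)
  exact ⟨m, hm, hms, fun i _ =>
    ⟨m + (q * a + i) - s, mem_pairSemigroup_of_le ha (by omega), by omega⟩⟩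

end PairSemigroup

section PairSemigroupRing

variable {k : Type} [Field k] {a q s : ℕ}

theorem nsmul_pair_eq (q : ℕ) : q • ({a, a + 1} : Set ℕ) = (q * a + ·) '' Set.Iic q := by
  induction q with
  | zero => ext n; simp
  | succ q ih =>
    ext n
    rw [succ_nsmul, ih]
    simp only [Set.mem_add, Set.mem_image, Set.mem_Iic, Set.mem_insert_iff, Set.mem_singleton_iff]
    constructor
    · rintro ⟨_, ⟨i, hi, rfl⟩, _, rfl | rfl, rfl⟩
      · exact ⟨i, by omega, by ring⟩
      · exact ⟨i + 1, by omega, by ring⟩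
    · rintro ⟨i, hi, rfl⟩
      rcases Nat.eq_zero_or_pos i with rfl | hi0
      · exact ⟨q * a, ⟨0, Nat.zero_le q, rfl⟩, a, Or.inl rfl, by ring⟩
      · exact ⟨q * a + (i - 1), ⟨i - 1, by omega, rfl⟩, a + 1, Or.inr rfl, by
          rw [add_mul, one_mul]; omega⟩

theorem nsmul_pair_subset (q : ℕ) : q • ({a, a + 1} : Set ℕ) ⊆ pairSemigroup a :=
  AddSubmonoid.nsmul_subset AddSubmonoid.subset_closure

theorem finite_nsmul_pair (q : ℕ) : (q • ({a, a + 1} : Set ℕ)).Finite :=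
  nsmul_pair_eq q ▸ (Set.finite_Iic q).image _

theorem mem_span_pair_pow_iff {y : ssr k (pairSemigroup a)} :
    y ∈ Ideal.span (monomials k _ {a, a + 1}) ^ q ↔ ∀ n, coeff n (y : k⟦X⟧) ≠ 0 →
      ∃ i ≤ q, ∃ h ∈ pairSemigroup a, q * a + i + h = n := by
  rw [span_monomials_pow AddSubmonoid.subset_closure,
    mem_span_monomials_iff (finite_nsmul_pair q) (nsmul_pair_subset q), nsmul_pair_eq]
  simp [Set.mem_add]

theorem mem_span_pair_pow_mul_iff (hs : s ∈ pairSemigroup a) {x : ssr k (pairSemigroup a)} :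
    x ∈ Ideal.span (monomials k _ {a, a + 1}) ^ q * Ideal.span (monomials k _ {s}) ↔
      ∀ n, coeff n (x : k⟦X⟧) ≠ 0 →
        ∃ i ≤ q, ∃ h ∈ pairSemigroup a, q * a + i + s + h = n := by
  have hsH : {s} ⊆ (pairSemigroup a : Set ℕ) := Set.singleton_subset_iff.2 hs
  rw [span_monomials_pow AddSubmonoid.subset_closure, Ideal.span_mul_span',
    ← monomials_add (nsmul_pair_subset q) hsH,
    mem_span_monomials_iff ((finite_nsmul_pair q).add (Set.finite_singleton s))
      (AddSubmonoid.add_subset (nsmul_pair_subset q) hsH), nsmul_pair_eq]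
  simp [Set.mem_add]

theorem mem_colon_span_pair_pow_iff (hs : s ∈ pairSemigroup a) {x : ssr k (pairSemigroup a)} :
    x ∈ (Ideal.span (monomials k (pairSemigroup a) {s})).colon
        ↑(Ideal.span (monomials k (pairSemigroup a) {a, a + 1}) ^ q) ↔
      ∀ v, coeff v (x : k⟦X⟧) ≠ 0 →
        ∀ i ≤ q, ∃ h ∈ pairSemigroup a, s + h = v + (q * a + i) := by
  rw [span_monomials_pow AddSubmonoid.subset_closure,
    mem_colon_span_monomials_iff (Set.finite_singleton s) (Set.singleton_subset_iff.2 hs)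
      (nsmul_pair_subset q), nsmul_pair_eq]
  simp

theorem exists_tp_mem_colon (ha : 0 < a) (hqa : a ≤ q) (hs : s ∈ pairSemigroup a)
    (hs0 : 0 < s) :
    ∃ m, ∃ hm : m ∈ pairSemigroup a, m < s ∧
      tp k _ m hm ∈ (Ideal.span (monomials k (pairSemigroup a) {s})).colon
        ↑(Ideal.span (monomials k (pairSemigroup a) {a, a + 1}) ^ q) := by
  obtain ⟨m, hm, hms, hmI⟩ := exists_lt_forall_add_mem ha hqa hs hs0
  refine ⟨m, hm, hms, (mem_colon_span_pair_pow_iff hs).2 fun v hv => ?_⟩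
  obtain rfl : v = m := by simpa [coeff_X_pow] using hv
  exact hmI

theorem forall_X_pow_dvd_iff (ha : 0 < a) (hs : s ∈ pairSemigroup a) (hs0 : 0 < s) :
    (∀ x ∈ (Ideal.span (monomials k (pairSemigroup a) {s})).colon
        ↑(Ideal.span (monomials k (pairSemigroup a) {a, a + 1}) ^ q),
      X ^ s ∣ (x : k⟦X⟧)) ↔ q < a := by
  constructor
  · intro h
    by_contra! hqa
    obtain ⟨m, hm, hms, hmI⟩ := exists_tp_mem_colon (k := k) ha hqa hs hs0
    simpa using X_pow_dvd_iff.1 (h _ hmI) m hms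
  · intro hqa x hx
    refine X_pow_dvd_iff.2 fun v hv => ?_
    by_contra hne
    exact absurd (le_of_forall_add_mem hqa ((mem_colon_span_pair_pow_iff hs).1 hx v hne))
      (not_le.2 hv)

theorem span_pair_pow_mul_colon_eq_iff (ha : 0 < a) (hs : s ∈ pairSemigroup a) (hs0 : 0 < s) :
    Ideal.span (monomials k _ {a, a + 1}) ^ q *
        (Ideal.span (monomials k (pairSemigroup a) {s})).colon
          ↑(Ideal.span (monomials k (pairSemigroup a) {a, a + 1}) ^ q) =
      Ideal.span (monomials k _ {a, a + 1}) ^ q * Ideal.span (monomials k _ {s}) ↔ q < a := by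
  constructor
  · intro h
    by_contra! hqa
    obtain ⟨m, hm, hms, hmI⟩ := exists_tp_mem_colon (k := k) ha hqa hs hs0
    have hqaP : q * a ∈ q • ({a, a + 1} : Set ℕ) :=
      nsmul_pair_eq q ▸ ⟨0, Nat.zero_le q, add_zero _⟩
    have hqa𝔪 : tp k _ (q * a) (nsmul_pair_subset q hqaP) ∈
        Ideal.span (monomials k _ {a, a + 1}) ^ q :=
      span_monomials_pow (k := k) AddSubmonoid.subset_closure q ▸
        Ideal.subset_span ⟨q * a, hqaP, rfl⟩
    have hmem := Ideal.mul_mem_mul hqa𝔪 hmI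
    rw [h, mem_span_pair_pow_mul_iff hs] at hmem
    obtain ⟨i, -, h, -, he⟩ := hmem (q * a + m) (by simp [← pow_add, coeff_X_pow])
    omega
  · intro hqa
    refine le_antisymm (Ideal.mul_le.2 fun y hy x hx => ?_) (Ideal.mul_mono_right fun x hx =>
      Submodule.mem_colon.2 fun y _ => Ideal.mul_mem_right y _ hx)
    rw [mem_span_pair_pow_mul_iff hs]
    intro n hn
    rw [Subalgebra.coe_mul] at hn
    obtain ⟨u, v, rfl, hu, hv⟩ := exists_coeff_ne_zero_of_coeff_mul_ne_zero hn
    obtain ⟨i, hi, h, hh, rfl⟩ := mem_span_pair_pow_iff.1 hy u hu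
    obtain ⟨j, hj, h', hh', he⟩ :=
      exists_add_eq_of_forall_add_mem hqa ((mem_colon_span_pair_pow_iff hs).1 hx v hv) hi
    exact ⟨j, hj, h' + h, add_mem hh' hh, by omega⟩

end PairSemigroupRing

theorem stmt12_general (k : Type) [Field k] (a : ℕ) (ha : 2 ≤ a)
    (H : AddSubmonoid ℕ) (hH : H = AddSubmonoid.closure {a, a + 1})
    (haH : a ∈ H) (ha1H : a + 1 ∈ H)
    (q : ℕ) (s : ℕ) (hs : s ∈ H) (hs0 : 0 < s)
    (𝔪 : Ideal (ssr k H)) (h𝔪 : 𝔪 = Ideal.span {tp k H a haH, tp k H (a + 1) ha1H})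
    (Q : Ideal (ssr k H)) (hQ : Q = Ideal.span {tp k H s hs})
    (I : Ideal (ssr k H)) (hI : I = Submodule.colon Q ((𝔪 ^ q : Ideal (ssr k H)) : Set (ssr k H))) :
    ((∀ x ∈ I, ∃ g : PowerSeries k, (x : PowerSeries k) = PowerSeries.X ^ s * g) ↔ q < a) ∧
    ((𝔪 ^ q * I = 𝔪 ^ q * Q) ↔ q < a) := by
  subst hH hI hQ h𝔪
  rw [← monomials_singleton hs, ← monomials_singleton ha1H, ← monomials_insert haH]
  exact ⟨forall_X_pow_dvd_iff (by omega) hs hs0,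
    span_pair_pow_mul_colon_eq_iff (by omega) hs hs0⟩

/-- Theorem 3.3: in `A = k[[t^a, t^{a+1}]]`, with `Q = (t^s)` and `I = Q : 𝔪^q`, the
conditions (1) `I ⊆ t^s k[[t]] ∩ A`, (2) `𝔪^q I = 𝔪^q Q`, (3) `q < a` are equivalent. -/
theorem stmt12 (k : Type) [Field k] (a : ℕ) (ha : 2 ≤ a)
    (H : AddSubmonoid ℕ) (hH : H = AddSubmonoid.closure {a, a + 1})
    (haH : a ∈ H) (ha1H : a + 1 ∈ H)
    (q : ℕ) (hq : 0 < q) (s : ℕ) (hs : s ∈ H) (hs0 : 0 < s)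
    (𝔪 : Ideal (ssr k H)) (h𝔪 : 𝔪 = Ideal.span {tp k H a haH, tp k H (a + 1) ha1H})
    (Q : Ideal (ssr k H)) (hQ : Q = Ideal.span {tp k H s hs})
    (I : Ideal (ssr k H)) (hI : I = Submodule.colon Q ((𝔪 ^ q : Ideal (ssr k H)) : Set (ssr k H))) :
    ((∀ x ∈ I, ∃ g : PowerSeries k, (x : PowerSeries k) = PowerSeries.X ^ s * g) ↔ q < a) ∧
    ((𝔪 ^ q * I = 𝔪 ^ q * Q) ↔ q < a) :=
  stmt12_general k a ha H hH haH ha1H q s hs hs0 𝔪 h𝔪 Q hQ I hI
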